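/- arXiv:1712.03718 — 7 statements merged into one kernel-verified Lean document; each statement's English description precedes it below -/
import Mathlib

section
/- The bracket defined on basis vectors e_i (i ≥ 1) by [e_1, e_i] = e_{i+1} for i ≥ 2 and [e_2, e_j] = e_{j+2} for j ≥ 3 (all other brackets of basis vectors with smaller index against larger index being zero), extended antisymmetrically and bilinearly, satisfies the Jacobi identity, defining the Lie algebra 𝔪₂. -/
/-- Structure constants of 𝔪₂: basis vectors are `e i = Finsupp.single i 1` for `i ≥ 1`
(index 0 unused). `[e 1, e i] = e (i+1)` for `i ≥ 2`, `[e 2, e j] = e (j+2)` for `j ≥ 3`,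
all other brackets of basis vectors with smaller index against larger index are zero,
extended antisymmetrically. -/
noncomputable def m2c (K : Type*) [Field K] (i j : ℕ) : ℕ →₀ K :=
  if i = 1 ∧ 2 ≤ j then Finsupp.single (j + 1) 1
  else if j = 1 ∧ 2 ≤ i then -Finsupp.single (i + 1) 1
  else if i = 2 ∧ 3 ≤ j then Finsupp.single (j + 2) 1
  else if j = 2 ∧ 3 ≤ i then -Finsupp.single (i + 2) 1
  else 0

/-- The bilinear extension of the bracket given by structure constants `c`. -/
noncomputable def brkt (K : Type*) [Field K] (c : ℕ → ℕ → (ℕ →₀ K)) (x y : ℕ →₀ K) :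
    ℕ →₀ K :=
  x.sum fun i a => y.sum fun j b => (a * b) • c i j

/-! The bracket of `𝔪₂` is graded: `[e i, e j] = γ i j • e (i + j)` with `γ i j ∈ {0, ±1}`
(`m2coeff`). On basis vectors the Jacobi identity therefore lives in the single degree
`i + j + k`, where it reduces to an identity between integer products of `γ`, checked by cases
on which of `i, j, k` equal `0, 1, 2`. Antisymmetry and the Jacobi identity are multilinear,
so the basis case implies the general one. -/

open Finsupp

section BilinearOnBasis

variable {R M N ι : Type*} [CommRing R] [AddCommGroup M] [Module R M] [AddCommGroup N]
  [Module R N]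

theorem LinearMap.apply_eq_neg_apply_of_basis (B : M →ₗ[R] M →ₗ[R] N) (b : Module.Basis ι R M)
    (h : ∀ i j, B (b i) (b j) = -B (b j) (b i)) (x y : M) : B x y = -B y x := by
  have hB : B = -B.flip := LinearMap.ext_basis b b fun i j => by simpa using h i j
  exact LinearMap.congr_fun₂ hB x y

def jacobiator (B : M →ₗ[R] M →ₗ[R] M) (x y z : M) : M :=
  B (B x y) z + B (B y z) x + B (B z x) y

theorem jacobiator_rotate (B : M →ₗ[R] M →ₗ[R] M) (x y z : M) :
    jacobiator B x y z = jacobiator B y z x := by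
  simp only [jacobiator]
  abel

theorem jacobiator_eq_zero_of_basis (B : M →ₗ[R] M →ₗ[R] M) (b : Module.Basis ι R M)
    (h : ∀ i j k, jacobiator B (b i) (b j) (b k) = 0) (x y z : M) : jacobiator B x y z = 0 := by
  have reduce_left : ∀ y z, (∀ i, jacobiator B (b i) y z = 0) → ∀ x, jacobiator B x y z = 0 := by
    intro y z hbasis x
    -- `L x` unfolds to `jacobiator B x y z`
    let L : M →ₗ[R] M := B.flip z ∘ₗ B.flip y + B (B y z) + B.flip y ∘ₗ B z
    have hL : L = 0 := b.ext fun i => hbasis i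
    exact LinearMap.congr_fun hL x
  -- the jacobiator is cyclically symmetric, so linearity in the first slot is enough
  refine reduce_left y z (fun i => ?_) x
  rw [jacobiator_rotate]
  refine reduce_left z (b i) (fun j => ?_) y
  rw [jacobiator_rotate]
  refine reduce_left (b i) (b j) (fun k => ?_) z
  exact h k i j

end BilinearOnBasis

noncomputable def brktₗ {R ι : Type*} [CommRing R] (c : ι → ι → (ι →₀ R)) :
    (ι →₀ R) →ₗ[R] (ι →₀ R) →ₗ[R] (ι →₀ R) :=
  linearCombination R fun i => linearCombination R (c i)

theorem brktₗ_single_single {R ι : Type*} [CommRing R] (c : ι → ι → (ι →₀ R)) (i j : ι) :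
    brktₗ c (single i 1) (single j 1) = c i j := by
  simp [brktₗ]

theorem brkt_eq_brktₗ (K : Type*) [Field K] (c : ℕ → ℕ → (ℕ →₀ K)) (x y : ℕ →₀ K) :
    brkt K c x y = brktₗ c x y := by
  simp [brkt, brktₗ, linearCombination_apply, Finsupp.sum, LinearMap.sum_apply,
    Finset.smul_sum, mul_smul]

def m2coeff (i j : ℕ) : ℤ :=
  if i = 1 ∧ 2 ≤ j then 1
  else if j = 1 ∧ 2 ≤ i then -1
  else if i = 2 ∧ 3 ≤ j then 1
  else if j = 2 ∧ 3 ≤ i then -1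
  else 0

theorem m2c_eq_smul_single (K : Type*) [Field K] (i j : ℕ) :
    m2c K i j = (m2coeff i j : K) • single (i + j) 1 := by
  unfold m2c m2coeff
  split_ifs <;> first | (obtain ⟨rfl, -⟩ := ‹_ ∧ _›; simp [add_comm]) | simp

theorem m2coeff_antisymm (i j : ℕ) : m2coeff i j = -m2coeff j i := by
  unfold m2coeff
  split_ifs <;> omega

theorem m2c_antisymm (K : Type*) [Field K] (i j : ℕ) : m2c K i j = -m2c K j i := by
  rw [m2c_eq_smul_single, m2c_eq_smul_single, m2coeff_antisymm i j, add_comm, Int.cast_neg,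
    neg_smul]

theorem m2coeff_jacobi (i j k : ℕ) :
    m2coeff i j * m2coeff (i + j) k + m2coeff j k * m2coeff (j + k) i +
      m2coeff k i * m2coeff (k + i) j = 0 := by
  rcases i with (_|_|_|i) <;> rcases j with (_|_|_|j) <;> rcases k with (_|_|_|k) <;>
    simp +arith [m2coeff]

theorem m2_brktₗ_single_single (K : Type*) [Field K] (i j : ℕ) (a : K) :
    brktₗ (m2c K) (a • single i 1) (single j 1) = (a * m2coeff i j) • single (i + j) 1 := by
  rw [map_smul, LinearMap.smul_apply, brktₗ_single_single, m2c_eq_smul_single, smul_smul]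

theorem m2_jacobiator_single (K : Type*) [Field K] (i j k : ℕ) :
    jacobiator (brktₗ (m2c K)) (single i 1) (single j 1) (single k 1) = 0 :=
  calc jacobiator (brktₗ (m2c K)) (single i 1) (single j 1) (single k 1)
      = ((m2coeff i j * m2coeff (i + j) k + m2coeff j k * m2coeff (j + k) i +
          m2coeff k i * m2coeff (k + i) j : ℤ) : K) • single (i + j + k) 1 := by
        simp only [jacobiator, brktₗ_single_single, m2c_eq_smul_single, m2_brktₗ_single_single,
          show j + k + i = i + j + k by ring, show k + i + j = i + j + k by ring, Int.cast_add,
          Int.cast_mul, add_smul]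
    _ = 0 := by rw [m2coeff_jacobi, Int.cast_zero, zero_smul]

/-- The bracket of 𝔪₂ is antisymmetric and satisfies the Jacobi identity, defining
the Lie algebra 𝔪₂. -/
theorem m2_is_lie_algebra (K : Type*) [Field K] :
    (∀ x y : ℕ →₀ K, brkt K (m2c K) x y = - brkt K (m2c K) y x) ∧
    (∀ x y z : ℕ →₀ K,
      brkt K (m2c K) (brkt K (m2c K) x y) z + brkt K (m2c K) (brkt K (m2c K) y z) x +
        brkt K (m2c K) (brkt K (m2c K) z x) y = 0) := by
  simp only [brkt_eq_brktₗ]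
  refine ⟨LinearMap.apply_eq_neg_apply_of_basis _ Finsupp.basisSingleOne fun i j => ?_,
    jacobiator_eq_zero_of_basis _ Finsupp.basisSingleOne fun i j k => ?_⟩
  · simpa only [coe_basisSingleOne, brktₗ_single_single] using m2c_antisymm K i j
  · simpa only [coe_basisSingleOne] using m2_jacobiator_single K i j k
end

section
/- The bracket [e_i, e_j] = c_{i,j} e_{i+j}, where c_{i,j} = 1 if j - i ≡ 1 (mod 3), c_{i,j} = 0 if j - i ≡ 0 (mod 3), and c_{i,j} = -1 if j - i ≡ -1 (mod 3), satisfies the Jacobi identity on the free vector space with basis e_1, e_2, e_3, …, defining the Lie algebra 𝔫₁. -/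
/-- The structure constant `c_{i,j} ∈ {-1,0,1}` of 𝔫₁, depending only on `(j - i) mod 3`:
it is `1` if `j - i ≡ 1 (mod 3)`, `0` if `j - i ≡ 0 (mod 3)`, `-1` if `j - i ≡ -1 (mod 3)`. -/
noncomputable def n1coeff (K : Type*) [Field K] (i j : ℕ) : K :=
  if ((j : ℤ) - (i : ℤ)) % 3 = 1 then 1
  else if ((j : ℤ) - (i : ℤ)) % 3 = 0 then 0
  else -1

/-- Structure constants of 𝔫₁: basis vectors are `e i = Finsupp.single i 1` for `i ≥ 1`
(index 0 unused), with `[e i, e j] = c_{i,j} • e (i+j)`. -/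
noncomputable def n1c (K : Type*) [Field K] (i j : ℕ) : ℕ →₀ K :=
  if 1 ≤ i ∧ 1 ≤ j then n1coeff K i j • Finsupp.single (i + j) 1 else 0

/-!
Both identities are bilinear (resp. trilinear), so it suffices to check them on basis vectors.
There `c_{i,j} = χ(j - i)` for the nontrivial character `χ` mod 3, which is odd, giving
antisymmetry; the Jacobi identity on `e_i, e_j, e_k` reduces to an identity for `χ` that only
depends on `i, j, k` mod 3 and is checked by evaluation.
-/

open Finsupp

section StructureConstants

variable {K : Type*} [Field K] (c : ℕ → ℕ → (ℕ →₀ K))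

noncomputable def brktBilin : (ℕ →₀ K) →ₗ[K] (ℕ →₀ K) →ₗ[K] (ℕ →₀ K) :=
  linearCombination K fun i => linearCombination K (c i)

theorem brkt_eq_brktBilin (x y : ℕ →₀ K) : brkt K c x y = brktBilin c x y := by
  simp only [brkt, brktBilin, linearCombination_apply, LinearMap.finsupp_sum_apply,
    LinearMap.smul_apply, Finsupp.smul_sum, smul_smul]

theorem brktBilin_single_one (i j : ℕ) : brktBilin c (single i 1) (single j 1) = c i j := by
  simp [brktBilin]

theorem brkt_antisymm_of_antisymm (h : ∀ i j, c i j = -c j i) (x y : ℕ →₀ K) :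
    brkt K c x y = -brkt K c y x := by
  have hsum : (brktBilin c).flip + brktBilin c = 0 := by
    ext i j
    simp [brktBilin_single_one, h i j]
  rw [brkt_eq_brktBilin, brkt_eq_brktBilin, eq_neg_iff_add_eq_zero]
  simpa using LinearMap.congr_fun₂ hsum y x

theorem brkt_jacobi_of_jacobi_single
    (h : ∀ i j k, brkt K c (c i j) (single k 1) + brkt K c (c j k) (single i 1) +
      brkt K c (c k i) (single j 1) = 0)
    (x y z : ℕ →₀ K) :
    brkt K c (brkt K c x y) z + brkt K c (brkt K c y z) x + brkt K c (brkt K c z x) y = 0 := by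
  simp only [brkt_eq_brktBilin] at h ⊢
  induction x using Finsupp.induction_linear with
  | zero => simp
  | add x₁ x₂ h₁ h₂ =>
    simp only [map_add, LinearMap.add_apply]
    linear_combination (norm := module) h₁ + h₂
  | single i a =>
    induction y using Finsupp.induction_linear with
    | zero => simp
    | add y₁ y₂ h₁ h₂ =>
      simp only [map_add, LinearMap.add_apply]
      linear_combination (norm := module) h₁ + h₂
    | single j b =>
      induction z using Finsupp.induction_linear with
      | zero => simp
      | add z₁ z₂ h₁ h₂ =>
        simp only [map_add, LinearMap.add_apply]
        linear_combination (norm := module) h₁ + h₂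
      | single k d =>
        simp only [← smul_single_one _ a, ← smul_single_one _ b, ← smul_single_one _ d,
          map_smul, LinearMap.smul_apply, brktBilin_single_one]
        linear_combination (norm := module) (a * b * d) • h i j k

end StructureConstants

section N1

variable {K : Type*} [Field K]

theorem n1coeff_eq_quadraticChar (i j : ℕ) :
    n1coeff K i j = quadraticChar (ZMod 3) ((j : ZMod 3) - i) := by
  have hcast : (j : ZMod 3) - i = (((j - i : ℤ) % 3 : ℤ) : ZMod 3) := by
    have h := ZMod.intCast_mod ((j : ℤ) - i) 3
    push_cast at h ⊢
    exact h.symm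
  have hrange : (j - i : ℤ) % 3 = 0 ∨ (j - i : ℤ) % 3 = 1 ∨ (j - i : ℤ) % 3 = 2 := by omega
  rw [hcast, n1coeff]
  rcases hrange with h | h | h <;> simp [h, show quadraticChar (ZMod 3) 2 = -1 by decide]

theorem n1coeff_antisymm (i j : ℕ) : n1coeff K i j = -n1coeff K j i := by
  have hodd : ∀ r : ZMod 3, quadraticChar (ZMod 3) (-r) = -quadraticChar (ZMod 3) r := by
    decide
  rw [n1coeff_eq_quadraticChar, n1coeff_eq_quadraticChar, ← neg_sub, hodd, Int.cast_neg]

theorem n1coeff_jacobi (i j k : ℕ) :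
    n1coeff K i j * n1coeff K (i + j) k + n1coeff K j k * n1coeff K (j + k) i +
      n1coeff K k i * n1coeff K (k + i) j = 0 := by
  have hχ : ∀ x y z : ZMod 3,
      quadraticChar (ZMod 3) (y - x) * quadraticChar (ZMod 3) (z - (x + y)) +
        quadraticChar (ZMod 3) (z - y) * quadraticChar (ZMod 3) (x - (y + z)) +
        quadraticChar (ZMod 3) (x - z) * quadraticChar (ZMod 3) (y - (z + x)) = 0 := by
    decide
  simp only [n1coeff_eq_quadraticChar, Nat.cast_add]
  exact_mod_cast congrArg (Int.cast : ℤ → K) (hχ i j k)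

theorem n1c_antisymm (i j : ℕ) : n1c K i j = -n1c K j i := by
  unfold n1c
  by_cases h : 1 ≤ i ∧ 1 ≤ j
  · rw [if_pos h, if_pos h.symm, n1coeff_antisymm, add_comm, neg_smul]
  · rw [if_neg h, if_neg (mt And.symm h), neg_zero]

theorem brkt_n1c_single_one (p q r : ℕ) :
    brkt K (n1c K) (n1c K p q) (single r 1) =
      if 1 ≤ p ∧ 1 ≤ q ∧ 1 ≤ r then
        (n1coeff K p q * n1coeff K (p + q) r) • single (p + q + r) 1
      else 0 := by
  by_cases hpq : 1 ≤ p ∧ 1 ≤ q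
  · rw [n1c, if_pos hpq, brkt_eq_brktBilin, map_smul, LinearMap.smul_apply,
      brktBilin_single_one, n1c]
    by_cases hr : 1 ≤ r
    · rw [if_pos ⟨by omega, hr⟩, if_pos ⟨hpq.1, hpq.2, hr⟩, smul_smul]
    · rw [if_neg (fun h => hr h.2), if_neg (fun h => hr h.2.2), smul_zero]
  · rw [n1c, if_neg hpq, if_neg (fun h => hpq ⟨h.1, h.2.1⟩)]
    simp [brkt]

theorem n1c_jacobi (i j k : ℕ) :
    brkt K (n1c K) (n1c K i j) (single k 1) + brkt K (n1c K) (n1c K j k) (single i 1) +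
      brkt K (n1c K) (n1c K k i) (single j 1) = 0 := by
  simp only [brkt_n1c_single_one]
  split_ifs
  · rw [show j + k + i = i + j + k by ring, show k + i + j = i + j + k by ring,
      ← add_smul, ← add_smul, n1coeff_jacobi, zero_smul]
  all_goals first | omega | simp

end N1

/-- The bracket `[e i, e j] = c_{i,j} e (i+j)` is antisymmetric and satisfies the Jacobi
identity, defining the Lie algebra 𝔫₁. -/
theorem n1_is_lie_algebra (K : Type*) [Field K] :
    (∀ x y : ℕ →₀ K, brkt K (n1c K) x y = - brkt K (n1c K) y x) ∧
    (∀ x y z : ℕ →₀ K,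
      brkt K (n1c K) (brkt K (n1c K) x y) z + brkt K (n1c K) (brkt K (n1c K) y z) x +
        brkt K (n1c K) (brkt K (n1c K) z x) y = 0) :=
  ⟨brkt_antisymm_of_antisymm _ n1c_antisymm, brkt_jacobi_of_jacobi_single _ n1c_jacobi⟩
end

section
/- The Lie algebra 𝔪₀ is generated as a Lie algebra by the elements e_1 and e_2; more precisely, every basis vector e_n with n ≥ 3 is an iterated bracket of e_1 and e_2, so the smallest Lie subalgebra containing e_1 and e_2 is all of 𝔪₀. -/
/-- Structure constants of 𝔪₀ (basis `e i = Finsupp.single i 1`, `i ≥ 1`; index 0 unused). -/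
noncomputable def m0c (K : Type*) [Field K] (i j : ℕ) : ℕ →₀ K :=
  if i = 1 ∧ 2 ≤ j then Finsupp.single (j + 1) 1
  else if j = 1 ∧ 2 ≤ i then -Finsupp.single (i + 1) 1
  else 0

lemma brkt_single (K : Type*) [Field K] (j : ℕ) (hj : 2 ≤ j) :
    brkt K (m0c K) (Finsupp.single 1 (1 : K)) (Finsupp.single j (1 : K)) =
      Finsupp.single (j + 1) (1 : K) := by
  rw [brkt, Finsupp.sum_single_index, Finsupp.sum_single_index]
  · simp [m0c, hj]
  · simp
  · simp [Finsupp.sum]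

/-- 𝔪₀ is generated as a Lie algebra by `e 1` and `e 2`: every subspace containing
`e 1` and `e 2` and closed under the bracket contains all basis vectors `e n`, `n ≥ 1`,
i.e. the smallest Lie subalgebra containing `e 1` and `e 2` is all of 𝔪₀. -/
theorem m0_generated_by_e1_e2 (K : Type*) [Field K] (p : Submodule K (ℕ →₀ K))
    (h1 : Finsupp.single 1 (1 : K) ∈ p) (h2 : Finsupp.single 2 (1 : K) ∈ p)
    (hcl : ∀ x ∈ p, ∀ y ∈ p, brkt K (m0c K) x y ∈ p) :
    ∀ n : ℕ, 1 ≤ n → Finsupp.single n (1 : K) ∈ p := by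
  intro n hn
  induction n with
  | zero => omega
  | succ m ih =>
    match m, ih with
    | 0, _ => exact h1
    | 1, _ => exact h2
    | (k + 2), ih =>
      have hm := ih (by omega)
      have := hcl _ h1 _ hm
      rwa [brkt_single K (k + 2) (by omega)] at this
end

section
/- For the Lie algebra 𝔪₀, the ideals of the lower central series satisfy g^{k} = span(e_{k+1}, e_{k+2}, …) for all k ≥ 2, where g^1 = 𝔪₀ and g^{k+1} = [𝔪₀, g^k]. Consequently ⋂_{k≥1} g^k = 0. -/
/-- The span of all brackets of elements of `p` with elements of `q`. -/
noncomputable def bracketSpan (K : Type*) [Field K] (c : ℕ → ℕ → (ℕ →₀ K))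
    (p q : Submodule K (ℕ →₀ K)) : Submodule K (ℕ →₀ K) :=
  Submodule.span K {z | ∃ x ∈ p, ∃ y ∈ q, z = brkt K c x y}

/-- The lower central series of 𝔪₀, shifted so that `m0lcs K k` is the ideal `g^(k+1)`:
`m0lcs K 0 = g^1 = 𝔪₀`, `m0lcs K (k+1) = [𝔪₀, m0lcs K k]`. -/
noncomputable def m0lcs (K : Type*) [Field K] : ℕ → Submodule K (ℕ →₀ K)
  | 0 => ⊤
  | k + 1 => bracketSpan K (m0c K) ⊤ (m0lcs K k)

/-- The bracket as a bilinear map. -/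
noncomputable def Fb {K : Type*} [Field K] (c : ℕ → ℕ → (ℕ →₀ K)) :
    (ℕ →₀ K) →ₗ[K] (ℕ →₀ K) →ₗ[K] (ℕ →₀ K) :=
  Finsupp.lsum K fun i => LinearMap.toSpanSingleton K _
    (Finsupp.lsum K fun j => LinearMap.toSpanSingleton K _ (c i j))

lemma brkt_eq_Fb {K : Type*} [Field K] (c : ℕ → ℕ → (ℕ →₀ K)) (x y : ℕ →₀ K) :
    brkt K c x y = Fb c x y := by
  simp [brkt, Fb, Finsupp.sum_apply', LinearMap.toSpanSingleton_apply, Finsupp.smul_sum,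
    mul_smul]

/-- The generating set of tails. -/
def SN (K : Type*) [Field K] (N : ℕ) : Set (ℕ →₀ K) :=
  {x | ∃ m : ℕ, N ≤ m ∧ x = Finsupp.single m (1 : K)}

lemma m0c_mem3 {K : Type*} [Field K] (i j : ℕ) :
    m0c K i j ∈ Submodule.span K (SN K 3) := by
  unfold m0c
  split_ifs with h1 h2
  · exact Submodule.subset_span ⟨j + 1, by omega, rfl⟩
  · exact Submodule.neg_mem _ (Submodule.subset_span ⟨i + 1, by omega, rfl⟩)
  · exact Submodule.zero_mem _

lemma brkt_mem3 {K : Type*} [Field K] (x y : ℕ →₀ K) :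
    brkt K (m0c K) x y ∈ Submodule.span K (SN K 3) := by
  unfold brkt
  refine Submodule.sum_mem _ fun i _ => Submodule.sum_mem _ fun j _ => ?_
  exact Submodule.smul_mem _ _ (m0c_mem3 i j)

lemma brkt_single_s7 {K : Type*} [Field K] (x : ℕ →₀ K) (m : ℕ) :
    brkt K (m0c K) x (Finsupp.single m (1 : K)) = x.sum fun i a => a • m0c K i m := by
  unfold brkt
  apply Finsupp.sum_congr
  intro i _
  rw [Finsupp.sum_single_index (by simp)]
  simp

lemma e_brkt {K : Type*} [Field K] (m : ℕ) (hm : 2 ≤ m) :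
    brkt K (m0c K) (Finsupp.single 1 (1 : K)) (Finsupp.single m (1 : K)) =
      Finsupp.single (m + 1) (1 : K) := by
  rw [brkt_single_s7, Finsupp.sum_single_index (by simp)]
  simp [m0c, hm]

lemma brkt_shift {K : Type*} [Field K] {N : ℕ} (hN : 2 ≤ N) (x : ℕ →₀ K) {y : ℕ →₀ K}
    (hy : y ∈ Submodule.span K (SN K N)) :
    brkt K (m0c K) x y ∈ Submodule.span K (SN K (N + 1)) := by
  rw [brkt_eq_Fb]
  have hle : Submodule.span K (SN K N) ≤
      (Submodule.span K (SN K (N + 1))).comap (Fb (m0c K) x) := by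
    rw [Submodule.span_le]
    rintro _ ⟨m, hm, rfl⟩
    simp only [Submodule.mem_comap, SetLike.mem_coe]
    rw [← brkt_eq_Fb, brkt_single_s7]
    refine Submodule.sum_mem _ fun i _ => Submodule.smul_mem _ _ ?_
    unfold m0c
    split_ifs with h1 h2
    · exact Submodule.subset_span ⟨m + 1, by omega, rfl⟩
    · omega
    · exact Submodule.zero_mem _
  exact hle hy

lemma m0lcs_eq {K : Type*} [Field K] (j : ℕ) :
    m0lcs K (j + 1) = Submodule.span K (SN K (j + 3)) := by
  induction j with
  | zero =>
    show bracketSpan K (m0c K) ⊤ ⊤ = _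
    apply le_antisymm
    · rw [bracketSpan, Submodule.span_le]
      rintro _ ⟨x, -, y, -, rfl⟩
      exact brkt_mem3 x y
    · rw [Submodule.span_le]
      rintro _ ⟨m, hm, rfl⟩
      have : Finsupp.single m (1 : K) =
          brkt K (m0c K) (Finsupp.single 1 1) (Finsupp.single (m - 1) 1) := by
        rw [e_brkt (m - 1) (by omega)]
        congr 1
        omega
      rw [this]
      exact Submodule.subset_span ⟨_, trivial, _, trivial, rfl⟩
  | succ j ih =>
    show bracketSpan K (m0c K) ⊤ (m0lcs K (j + 1)) = _
    rw [ih]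
    apply le_antisymm
    · rw [bracketSpan, Submodule.span_le]
      rintro _ ⟨x, -, y, hy, rfl⟩
      exact brkt_shift (N := j + 3) (by omega) x hy
    · rw [Submodule.span_le]
      rintro _ ⟨m, hm, rfl⟩
      have h1 : Finsupp.single (m - 1) (1 : K) ∈ Submodule.span K (SN K (j + 3)) :=
        Submodule.subset_span ⟨m - 1, by omega, rfl⟩
      have : Finsupp.single m (1 : K) =
          brkt K (m0c K) (Finsupp.single 1 1) (Finsupp.single (m - 1) 1) := by
        rw [e_brkt (m - 1) (by omega)]
        congr 1
        omega
      rw [this]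
      exact Submodule.subset_span ⟨_, trivial, _, h1, rfl⟩

/-- For 𝔪₀, the lower central series satisfies `g^k = span(e (k+1), e (k+2), …)` for all
`k ≥ 2` (here `g^k = m0lcs K (k-1)`), and consequently `⋂_k g^k = 0`. -/
theorem m0_lower_central_series (K : Type*) [Field K] :
    (∀ k : ℕ, 2 ≤ k →
      m0lcs K (k - 1) =
        Submodule.span K {x : ℕ →₀ K | ∃ m : ℕ, k + 1 ≤ m ∧ x = Finsupp.single m (1 : K)}) ∧
    (⨅ k : ℕ, m0lcs K k) = ⊥ := by
  constructor
  · intro k hk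
    have : k - 1 = (k - 2) + 1 := by omega
    rw [this, m0lcs_eq]
    have : k - 2 + 3 = k + 1 := by omega
    rw [this]
    rfl
  · apply le_antisymm _ bot_le
    intro x hx
    simp only [Submodule.mem_iInf] at hx
    rw [Submodule.mem_bot]
    ext n
    have h1 : x ∈ Submodule.span K (SN K (n + 3)) := by
      rw [← m0lcs_eq]; exact hx (n + 1)
    have h2 : Submodule.span K (SN K (n + 3)) ≤ LinearMap.ker (Finsupp.lapply n) := by
      rw [Submodule.span_le]
      rintro _ ⟨m, hm, rfl⟩
      simp only [SetLike.mem_coe, LinearMap.mem_ker, Finsupp.lapply_apply]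
      rw [Finsupp.single_apply_eq_zero]
      intro h; omega
    have := h2 h1
    simpa using this
end

section
/- For each m ≥ 2, the bilinear form ω_{2m-1} = Σ_{l=2}^{m} (-1)^l e^l ∧ e^{2m+1-l} is a 2-cocycle on the Lie algebra 𝔪₀, i.e. ω_{2m-1}([x,y],z) + ω_{2m-1}([y,z],x) + ω_{2m-1}([z,x],y) = 0 for all x, y, z ∈ 𝔪₀. -/
/-- The bilinear form `ω_{2m-1} = Σ_{l=2}^{m} (-1)^l e^l ∧ e^{2m+1-l}` on 𝔪₀, where
`e^i` are the dual basis functionals and `(e^a ∧ e^b)(x,y) = e^a(x)e^b(y) - e^a(y)e^b(x)`. -/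
noncomputable def omegaForm (K : Type*) [Field K] (m : ℕ) (x y : ℕ →₀ K) : K :=
  ∑ l ∈ Finset.Icc 2 m,
    (-1 : K) ^ l * (x l * y (2 * m + 1 - l) - x (2 * m + 1 - l) * y l)

lemma m0c_apply (K : Type*) [Field K] (i j k : ℕ) :
    (m0c K i j) k = (if i = 1 ∧ j = k - 1 ∧ 3 ≤ k then 1 else 0)
      - (if j = 1 ∧ i = k - 1 ∧ 3 ≤ k then 1 else 0) := by
  unfold m0c
  split_ifs
  all_goals simp only [Finsupp.single_apply, Finsupp.neg_apply, Finsupp.coe_zero, Pi.zero_apply]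
  all_goals try split_ifs
  all_goals first
    | (exfalso; omega)
    | norm_num

lemma sum_if_aux (K : Type*) [Field K] (f : ℕ →₀ K) (b : ℕ) (g : ℕ → K → K)
    (hg : g b 0 = 0) : (f.sum fun i a => if i = b then g i a else 0) = g b (f b) := by
  rw [Finsupp.sum_ite_eq']
  split_ifs with h
  · rfl
  · rw [Finsupp.notMem_support_iff.mp h, hg]

lemma brkt_apply (K : Type*) [Field K] (x y : ℕ →₀ K) (k : ℕ) (hk : 2 ≤ k) :
    brkt K (m0c K) x y k = x 1 * y (k - 1) - y 1 * x (k - 1) := by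
  unfold brkt
  rw [Finsupp.sum_apply]
  simp only [Finsupp.sum_apply, Finsupp.smul_apply, smul_eq_mul, m0c_apply, mul_sub,
    mul_ite, mul_one, mul_zero]
  by_cases h3 : 3 ≤ k
  · simp only [h3, and_true, Finsupp.sum_sub, ite_and]
    have e1 : (x.sum fun i a => y.sum fun j b => if i = 1 then (if j = k - 1 then a * b else 0) else 0)
        = x 1 * y (k - 1) := by
      have : ∀ i a, (y.sum fun j b => if i = 1 then (if j = k - 1 then a * b else 0) else 0)
          = if i = 1 then a * y (k - 1) else 0 := by
        intro i a
        split_ifs with h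
        · exact sum_if_aux K y (k - 1) (fun j b => a * b) (by ring)
        · simp
      simp only [this]
      exact sum_if_aux K x 1 (fun i a => a * y (k - 1)) (by ring)
    have e2 : (x.sum fun i a => y.sum fun j b => if j = 1 then (if i = k - 1 then a * b else 0) else 0)
        = y 1 * x (k - 1) := by
      have : ∀ i a, (y.sum fun j b => if j = 1 then (if i = k - 1 then a * b else 0) else 0)
          = if i = k - 1 then a * y 1 else 0 := by
        intro i a
        rw [sum_if_aux K y 1 (fun j b => if i = k - 1 then a * b else 0) (by split_ifs <;> ring)]
      simp only [this]
      rw [sum_if_aux K x (k - 1) (fun i a => a * y 1) (by ring)]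
      ring
    rw [e1, e2]
  · have hk2 : k = 2 := by omega
    subst hk2
    simp only [show ¬(3 ≤ 2) by omega, and_false, if_false, sub_zero]
    simp [Finsupp.sum]
    ring

lemma tele_aux (K : Type*) [Field K] (H : ℕ → K) :
    ∀ n, 2 ≤ n → ∑ l ∈ Finset.Icc 2 n, (H l - H (l + 1)) = H 2 - H (n + 1) := by
  intro n hn
  induction n, hn using Nat.le_induction with
  | base => simp
  | succ n hn ih =>
    rw [Finset.sum_Icc_succ_top (by omega), ih]
    ring

/-- For each `m ≥ 2`, the form `ω_{2m-1}` is a 2-cocycle on 𝔪₀. -/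
theorem omega_is_cocycle (K : Type*) [Field K] (m : ℕ) (hm : 2 ≤ m) :
    ∀ x y z : ℕ →₀ K,
      omegaForm K m (brkt K (m0c K) x y) z + omegaForm K m (brkt K (m0c K) y z) x +
        omegaForm K m (brkt K (m0c K) z x) y = 0 := by
  intro x y z
  set H : ℕ → K := fun l => (-1 : K) ^ l *
      (x 1 * (y (l - 1) * z (2 * m + 1 - l) - z (l - 1) * y (2 * m + 1 - l))
        + y 1 * (z (l - 1) * x (2 * m + 1 - l) - x (l - 1) * z (2 * m + 1 - l))
        + z 1 * (x (l - 1) * y (2 * m + 1 - l) - y (l - 1) * x (2 * m + 1 - l))) with hH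
  unfold omegaForm
  rw [← Finset.sum_add_distrib, ← Finset.sum_add_distrib]
  have key : ∀ l ∈ Finset.Icc 2 m,
      ((-1 : K) ^ l * (brkt K (m0c K) x y l * z (2 * m + 1 - l)
          - brkt K (m0c K) x y (2 * m + 1 - l) * z l)
        + (-1 : K) ^ l * (brkt K (m0c K) y z l * x (2 * m + 1 - l)
          - brkt K (m0c K) y z (2 * m + 1 - l) * x l)
        + (-1 : K) ^ l * (brkt K (m0c K) z x l * y (2 * m + 1 - l)
          - brkt K (m0c K) z x (2 * m + 1 - l) * y l))
      = H l - H (l + 1) := by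
    intro l hl
    rw [Finset.mem_Icc] at hl
    rw [brkt_apply K x y l (by omega), brkt_apply K x y (2 * m + 1 - l) (by omega),
      brkt_apply K y z l (by omega), brkt_apply K y z (2 * m + 1 - l) (by omega),
      brkt_apply K z x l (by omega), brkt_apply K z x (2 * m + 1 - l) (by omega)]
    simp only [hH]
    rw [show 2 * m + 1 - l - 1 = 2 * m - l from by omega,
      show l + 1 - 1 = l from by omega,
      show 2 * m + 1 - (l + 1) = 2 * m - l from by omega,
      pow_succ]
    ring
  rw [Finset.sum_congr rfl key, tele_aux K H m hm]
  have h2 : H 2 = 0 := by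
    simp only [hH]
    norm_num
    ring
  have hm1 : H (m + 1) = 0 := by
    simp only [hH]
    rw [show m + 1 - 1 = m from by omega, show 2 * m + 1 - (m + 1) = m from by omega]
    ring
  rw [h2, hm1, sub_zero]
end

section
/- For each m ≥ 2, the cocycle ω_{2m-1} on 𝔪₀ is not a coboundary: there is no linear functional b on 𝔪₀ with ω_{2m-1}(x,y) = b([x,y]) for all x, y. -/
/-- For each `m ≥ 2`, the cocycle `ω_{2m-1}` on 𝔪₀ is not a coboundary: there is no
linear functional `b` with `ω_{2m-1}(x,y) = b([x,y])` for all `x, y`. -/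
theorem omega_not_coboundary (K : Type*) [Field K] [CharZero K] (m : ℕ) (hm : 2 ≤ m) :
    ¬∃ b : (ℕ →₀ K) →ₗ[K] K,
      ∀ x y : ℕ →₀ K, omegaForm K m x y = b (brkt K (m0c K) x y) := by
  rintro ⟨b, hb⟩
  have hb2 := hb (Finsupp.single 2 1) (Finsupp.single (2 * m - 1) 1)
  have hbr : brkt K (m0c K) (Finsupp.single 2 1) (Finsupp.single (2 * m - 1) 1) = 0 := by
    rw [brkt]
    rw [Finsupp.sum_single_index (by simp)]
    rw [Finsupp.sum_single_index (by simp)]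
    have h2 : m0c K 2 (2 * m - 1) = 0 := by
      rw [m0c]
      rw [if_neg (by omega), if_neg (by omega)]
    simp [h2]
  have homega : omegaForm K m (Finsupp.single 2 1) (Finsupp.single (2 * m - 1) 1) = 1 := by
    rw [omegaForm]
    rw [Finset.sum_eq_single 2]
    · have e1 : 2 * m + 1 - 2 = 2 * m - 1 := by omega
      rw [e1]
      have hne : (2 * m - 1 : ℕ) ≠ 2 := by omega
      simp [Finsupp.single_apply, hne]
    · intro l hl hlne
      simp only [Finset.mem_Icc] at hl
      have h1 : Finsupp.single 2 (1 : K) l = 0 := by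
        rw [Finsupp.single_apply, if_neg (by omega)]
      have h2 : Finsupp.single 2 (1 : K) (2 * m + 1 - l) = 0 := by
        rw [Finsupp.single_apply, if_neg (by omega)]
      rw [h1, h2]
      ring
    · intro h
      exact absurd (Finset.mem_Icc.mpr ⟨le_refl 2, hm⟩) h
  rw [homega, hbr, map_zero] at hb2
  exact one_ne_zero hb2
end

section
/- The span of the monomials u⊗t^{2k+1}, v⊗t^{2k+1}, w⊗t^{2k+2} for k ≥ 0 is a Lie subalgebra of the loop algebra 𝔤 ⊗ K[t], where 𝔤 is the 3-dimensional Lie algebra with basis u, v, w and brackets [u,v] = w, [v,w] = εu, [w,u] = v (ε = ±1). -/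
open Polynomial

/-- The loop algebra `𝔤 ⊗ K[t]` where `𝔤` has basis `u, v, w` with `[u,v] = w`,
`[v,w] = ε u`, `[w,u] = v`: an element `a ⊗ P + b ⊗ Q + c ⊗ R` is recorded as the
triple `(P, Q, R)` of its `u`-, `v`- and `w`-components, and the bracket
`[a⊗P, b⊗Q] = [a,b] ⊗ PQ` reads in components as below. -/
noncomputable def loopBracket (K : Type*) [Field K] (ε : K)
    (x y : Polynomial K × Polynomial K × Polynomial K) :
    Polynomial K × Polynomial K × Polynomial K :=
  (ε • (x.2.1 * y.2.2 - x.2.2 * y.2.1),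
    x.2.2 * y.1 - x.1 * y.2.2,
    x.1 * y.2.1 - x.2.1 * y.1)

/-- The span of the monomials `u ⊗ t^(2k+1)`, `v ⊗ t^(2k+1)`, `w ⊗ t^(2k+2)`, `k ≥ 0`. -/
noncomputable def loopSubspace (K : Type*) [Field K] :
    Submodule K (Polynomial K × Polynomial K × Polynomial K) :=
  Submodule.span K
    {p | ∃ k : ℕ, p = ((X : Polynomial K) ^ (2 * k + 1), 0, 0) ∨
      p = (0, (X : Polynomial K) ^ (2 * k + 1), 0) ∨
      p = (0, 0, (X : Polynomial K) ^ (2 * k + 2))}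

lemma lb_add_left (K : Type*) [Field K] (ε : K) (x y z : Polynomial K × Polynomial K × Polynomial K) :
    loopBracket K ε (x + y) z = loopBracket K ε x z + loopBracket K ε y z := by
  simp only [loopBracket, Prod.mk_add_mk, Prod.ext_iff, Prod.fst_add, Prod.snd_add,
    Polynomial.smul_eq_C_mul]
  refine ⟨by ring, by ring, by ring⟩

lemma lb_add_right (K : Type*) [Field K] (ε : K) (x y z : Polynomial K × Polynomial K × Polynomial K) :
    loopBracket K ε x (y + z) = loopBracket K ε x y + loopBracket K ε x z := by
  simp only [loopBracket, Prod.mk_add_mk, Prod.ext_iff, Prod.fst_add, Prod.snd_add,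
    Polynomial.smul_eq_C_mul]
  refine ⟨by ring, by ring, by ring⟩

lemma lb_smul_left (K : Type*) [Field K] (ε c : K) (x y : Polynomial K × Polynomial K × Polynomial K) :
    loopBracket K ε (c • x) y = c • loopBracket K ε x y := by
  simp only [loopBracket, Prod.smul_mk, Prod.ext_iff, Prod.smul_fst, Prod.smul_snd,
    Polynomial.smul_eq_C_mul]
  refine ⟨by ring, by ring, by ring⟩

lemma lb_smul_right (K : Type*) [Field K] (ε c : K) (x y : Polynomial K × Polynomial K × Polynomial K) :
    loopBracket K ε x (c • y) = c • loopBracket K ε x y := by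
  simp only [loopBracket, Prod.smul_mk, Prod.ext_iff, Prod.smul_fst, Prod.smul_snd,
    Polynomial.smul_eq_C_mul]
  refine ⟨by ring, by ring, by ring⟩

lemma lb_gen (K : Type*) [Field K] (ε : K)
    (x y : Polynomial K × Polynomial K × Polynomial K)
    (hx : x ∈ {p | ∃ k : ℕ, p = ((X : Polynomial K) ^ (2 * k + 1), 0, 0) ∨
      p = (0, (X : Polynomial K) ^ (2 * k + 1), 0) ∨
      p = (0, 0, (X : Polynomial K) ^ (2 * k + 2))})
    (hy : y ∈ {p | ∃ k : ℕ, p = ((X : Polynomial K) ^ (2 * k + 1), 0, 0) ∨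
      p = (0, (X : Polynomial K) ^ (2 * k + 1), 0) ∨
      p = (0, 0, (X : Polynomial K) ^ (2 * k + 2))}) :
    loopBracket K ε x y ∈ loopSubspace K := by
  obtain ⟨k, hk | hk | hk⟩ := hx <;> obtain ⟨l, hl | hl | hl⟩ := hy <;> subst hk <;> subst hl
  · have h : loopBracket K ε ((X:Polynomial K)^(2*k+1),0,0) ((X:Polynomial K)^(2*l+1),0,0)
        = 0 := by
      simp [loopBracket, Prod.ext_iff]
    rw [h]; exact zero_mem _
  · have h : loopBracket K ε ((X:Polynomial K)^(2*k+1),0,0) (0,(X:Polynomial K)^(2*l+1),0)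
        = (0, 0, (X:Polynomial K)^(2*(k+l)+2)) := by
      simp only [loopBracket, Prod.ext_iff, Polynomial.smul_eq_C_mul]
      refine ⟨by ring, by ring, by ring⟩
    rw [h]; exact Submodule.subset_span ⟨k+l, Or.inr (Or.inr rfl)⟩
  · have h : loopBracket K ε ((X:Polynomial K)^(2*k+1),0,0) (0,0,(X:Polynomial K)^(2*l+2))
        = (-1 : K) • (0, (X:Polynomial K)^(2*(k+l+1)+1), 0) := by
      simp only [loopBracket, Prod.ext_iff, Prod.smul_mk, Polynomial.smul_eq_C_mul]
      refine ⟨by ring, by push_cast [map_neg, map_one]; ring, by ring⟩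
    rw [h]
    exact Submodule.smul_mem _ _ (Submodule.subset_span ⟨k+l+1, Or.inr (Or.inl rfl)⟩)
  · have h : loopBracket K ε (0,(X:Polynomial K)^(2*k+1),0) ((X:Polynomial K)^(2*l+1),0,0)
        = (-1 : K) • (0, 0, (X:Polynomial K)^(2*(k+l)+2)) := by
      simp only [loopBracket, Prod.ext_iff, Prod.smul_mk, Polynomial.smul_eq_C_mul]
      refine ⟨by ring, by ring, by push_cast [map_neg, map_one]; ring⟩
    rw [h]
    exact Submodule.smul_mem _ _ (Submodule.subset_span ⟨k+l, Or.inr (Or.inr rfl)⟩)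
  · have h : loopBracket K ε (0,(X:Polynomial K)^(2*k+1),0) (0,(X:Polynomial K)^(2*l+1),0)
        = 0 := by
      simp [loopBracket, Prod.ext_iff]
    rw [h]; exact zero_mem _
  · have h : loopBracket K ε (0,(X:Polynomial K)^(2*k+1),0) (0,0,(X:Polynomial K)^(2*l+2))
        = ε • ((X:Polynomial K)^(2*(k+l+1)+1), 0, 0) := by
      simp only [loopBracket, Prod.ext_iff, Prod.smul_mk, Polynomial.smul_eq_C_mul]
      refine ⟨by ring, by ring, by ring⟩
    rw [h]
    exact Submodule.smul_mem _ _ (Submodule.subset_span ⟨k+l+1, Or.inl rfl⟩)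
  · have h : loopBracket K ε (0,0,(X:Polynomial K)^(2*k+2)) ((X:Polynomial K)^(2*l+1),0,0)
        = (0, (X:Polynomial K)^(2*(k+l+1)+1), 0) := by
      simp only [loopBracket, Prod.ext_iff, Polynomial.smul_eq_C_mul]
      refine ⟨by ring, by ring, by ring⟩
    rw [h]; exact Submodule.subset_span ⟨k+l+1, Or.inr (Or.inl rfl)⟩
  · have h : loopBracket K ε (0,0,(X:Polynomial K)^(2*k+2)) (0,(X:Polynomial K)^(2*l+1),0)
        = (-ε) • ((X:Polynomial K)^(2*(k+l+1)+1), 0, 0) := by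
      simp only [loopBracket, Prod.ext_iff, Prod.smul_mk, Polynomial.smul_eq_C_mul]
      refine ⟨by push_cast [map_neg, map_one]; ring, by ring, by ring⟩
    rw [h]
    exact Submodule.smul_mem _ _ (Submodule.subset_span ⟨k+l+1, Or.inl rfl⟩)
  · have h : loopBracket K ε (0,0,(X:Polynomial K)^(2*k+2)) (0,0,(X:Polynomial K)^(2*l+2))
        = 0 := by
      simp [loopBracket, Prod.ext_iff]
    rw [h]; exact zero_mem _


/-- The bracket of the loop algebra satisfies the Jacobi identity (so in particular `𝔤`
is a Lie algebra), and the span of the monomials `u ⊗ t^(2k+1)`, `v ⊗ t^(2k+1)`,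
`w ⊗ t^(2k+2)`, `k ≥ 0`, is a Lie subalgebra of the loop algebra `𝔤 ⊗ K[t]`. -/
theorem loop_subalgebra (K : Type*) [Field K] (ε : K) (hε : ε = 1 ∨ ε = -1) :
    (∀ x y z : Polynomial K × Polynomial K × Polynomial K,
      loopBracket K ε (loopBracket K ε x y) z + loopBracket K ε (loopBracket K ε y z) x +
        loopBracket K ε (loopBracket K ε z x) y = 0) ∧
    (∀ x ∈ loopSubspace K, ∀ y ∈ loopSubspace K, loopBracket K ε x y ∈ loopSubspace K) := by
  constructor
  · intro x y z
    simp only [loopBracket, Prod.mk_add_mk, Prod.ext_iff, Prod.fst_add, Prod.snd_add,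
      Prod.fst_zero, Prod.snd_zero, Prod.mk_eq_zero, Polynomial.smul_eq_C_mul]
    refine ⟨by ring, by ring, by ring⟩
  · intro x hx y hy
    induction hx using Submodule.span_induction with
    | mem p hp =>
      induction hy using Submodule.span_induction with
      | mem q hq => exact lb_gen K ε p q hp hq
      | zero =>
        have h : loopBracket K ε p 0 = 0 := by simp [loopBracket, Prod.ext_iff]
        rw [h]; exact zero_mem _
      | add a b _ _ ha hb => rw [lb_add_right]; exact add_mem ha hb
      | smul c a _ ha => rw [lb_smul_right]; exact Submodule.smul_mem _ c ha
    | zero =>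
      have h : loopBracket K ε 0 y = 0 := by simp [loopBracket, Prod.ext_iff]
      rw [h]; exact zero_mem _
    | add a b _ _ ha hb => rw [lb_add_left]; exact add_mem ha hb
    | smul c a _ ha => rw [lb_smul_left]; exact Submodule.smul_mem _ c ha
end
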